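/- The rigid impact map does not increase kinetic energy: if D is symmetric positive definite, J has full row rank, and q⁺ = Δ(q⁻) is the post-impact velocity, then (q⁺)ᵀ D q⁺ ≤ (q⁻)ᵀ D q⁻, with equality if and only if J q⁻ = 0. -/

import Mathlib

open Matrix

private lemma dp_helper {k l : Type*} [Fintype k] [Fintype l]
    (A : Matrix k l ℝ) (B : Matrix k k ℝ) (x : l → ℝ) :
    (A *ᵥ x) ⬝ᵥ (B *ᵥ (A *ᵥ x)) = x ⬝ᵥ ((Aᵀ * B * A) *ᵥ x) := by
  simp [Matrix.dotProduct_mulVec, ← Matrix.vecMul_vecMul, Matrix.vecMul_transpose,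
    Matrix.mulVec_mulVec, Matrix.mul_assoc]

theorem stmt_7 (n m : ℕ) (D : Matrix (Fin n) (Fin n) ℝ)
    (J : Matrix (Fin m) (Fin n) ℝ)
    (hD : D.PosDef) (hJ : J.rank = m) (qminus : Fin n → ℝ) :
    let qplus : Fin n → ℝ :=
      (1 - D⁻¹ * Jᵀ * (J * D⁻¹ * Jᵀ)⁻¹ * J) *ᵥ qminus
    qplus ⬝ᵥ (D *ᵥ qplus) ≤ qminus ⬝ᵥ (D *ᵥ qminus) ∧
    (qplus ⬝ᵥ (D *ᵥ qplus) = qminus ⬝ᵥ (D *ᵥ qminus) ↔ J *ᵥ qminus = 0) := by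
  intro qplus
  set M : Matrix (Fin m) (Fin m) ℝ := J * D⁻¹ * Jᵀ with hMdef
  have hDinv : (D⁻¹).PosDef := hD.inv
  -- injectivity of Jᵀ *ᵥ ·
  have hJT : ∀ x : Fin m → ℝ, Jᵀ *ᵥ x = 0 → x = 0 := by
    intro x hx
    have hr : Jᵀ.rank = m := by rw [J.rank_transpose, hJ]
    have hk : LinearMap.ker Jᵀ.mulVecLin = ⊥ := by
      have h1 := LinearMap.finrank_range_add_finrank_ker Jᵀ.mulVecLin
      rw [show Module.finrank ℝ (LinearMap.range Jᵀ.mulVecLin) = m from hr,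
        Module.finrank_pi] at h1
      have : Module.finrank ℝ (LinearMap.ker Jᵀ.mulVecLin) = 0 := by
        simpa using h1
      exact Submodule.finrank_eq_zero.mp this
    have hmem : x ∈ LinearMap.ker Jᵀ.mulVecLin :=
      LinearMap.mem_ker.mpr (by rw [Matrix.mulVecLin_apply]; exact hx)
    rw [hk, Submodule.mem_bot] at hmem
    exact hmem
  have hMalt : M = Jᵀᵀ * D⁻¹ * Jᵀ := by rw [transpose_transpose]
  have hM : M.PosDef := by
    refine Matrix.PosDef.of_dotProduct_mulVec_pos ?_ ?_
    · show Mᴴ = M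
      have hd : D⁻¹ᵀ = D⁻¹ := by
        have := hDinv.isHermitian.eq
        rwa [conjTranspose_eq_transpose_of_trivial] at this
      rw [conjTranspose_eq_transpose_of_trivial, hMdef]
      simp only [transpose_mul, transpose_transpose, hd, Matrix.mul_assoc]
    · intro x hx
      have hy : Jᵀ *ᵥ x ≠ 0 := fun h => hx (hJT x h)
      have h0 := hDinv.dotProduct_mulVec_pos hy
      simp only [star_trivial] at h0 ⊢
      rw [hMalt, ← dp_helper]
      exact h0
  haveI := hD.isUnit.invertible
  haveI := hM.isUnit.invertible
  have hDsym : D⁻¹ᵀ = D⁻¹ := by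
    have := hDinv.isHermitian.eq; rwa [conjTranspose_eq_transpose_of_trivial] at this
  have hMsym : M⁻¹ᵀ = M⁻¹ := by
    have := hM.inv.isHermitian.eq; rwa [conjTranspose_eq_transpose_of_trivial] at this
  set P : Matrix (Fin n) (Fin n) ℝ := 1 - D⁻¹ * Jᵀ * M⁻¹ * J with hPdef
  have e1 : Pᵀ = 1 - Jᵀ * M⁻¹ * J * D⁻¹ := by
    rw [hPdef, transpose_sub, transpose_one, transpose_mul, transpose_mul, transpose_mul,
      transpose_transpose, hDsym, hMsym]
    simp only [Matrix.mul_assoc]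
  have hkey : Pᵀ * D * P = D - Jᵀ * M⁻¹ * J := by
    have hid : D⁻¹ * D = 1 := inv_mul_of_invertible D
    have hid2 : D * D⁻¹ = 1 := mul_inv_of_invertible D
    have hidM : M⁻¹ * M = 1 := inv_mul_of_invertible M
    rw [e1, hPdef]
    simp only [Matrix.sub_mul, Matrix.mul_sub, Matrix.one_mul, Matrix.mul_one]
    have c1 : Jᵀ * M⁻¹ * J * D⁻¹ * D = Jᵀ * M⁻¹ * J := by
      rw [Matrix.mul_assoc, hid, Matrix.mul_one]
    have c2 : D * (D⁻¹ * Jᵀ * M⁻¹ * J) = Jᵀ * M⁻¹ * J := by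
      rw [show D⁻¹ * Jᵀ * M⁻¹ * J = D⁻¹ * (Jᵀ * M⁻¹ * J) by
        simp only [Matrix.mul_assoc], ← Matrix.mul_assoc, hid2, Matrix.one_mul]
    have c3 : Jᵀ * M⁻¹ * J * (D⁻¹ * Jᵀ * M⁻¹ * J) = Jᵀ * M⁻¹ * J := by
      calc Jᵀ * M⁻¹ * J * (D⁻¹ * Jᵀ * M⁻¹ * J)
          = Jᵀ * M⁻¹ * (J * D⁻¹ * Jᵀ) * (M⁻¹ * J) := by
            simp only [Matrix.mul_assoc]
        _ = Jᵀ * (M⁻¹ * M) * (M⁻¹ * J) := by rw [← hMdef]; simp only [Matrix.mul_assoc]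
        _ = Jᵀ * M⁻¹ * J := by rw [hidM, Matrix.mul_one, Matrix.mul_assoc]
    rw [c1, c2, c3]
    abel
  -- quadratic form identity
  have hq : qplus ⬝ᵥ (D *ᵥ qplus) =
      qminus ⬝ᵥ (D *ᵥ qminus) - (J *ᵥ qminus) ⬝ᵥ (M⁻¹ *ᵥ (J *ᵥ qminus)) := by
    have hqp : qplus = P *ᵥ qminus := rfl
    rw [hqp, dp_helper, hkey, Matrix.sub_mulVec, dotProduct_sub, dp_helper]
  set y := J *ᵥ qminus with hy
  have hnn : 0 ≤ y ⬝ᵥ (M⁻¹ *ᵥ y) := by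
    simpa using hM.inv.posSemidef.dotProduct_mulVec_nonneg y
  constructor
  · rw [hq]; linarith
  · rw [hq]
    constructor
    · intro h
      have hc : y ⬝ᵥ (M⁻¹ *ᵥ y) = 0 := by linarith
      by_contra hy0
      have := hM.inv.dotProduct_mulVec_pos hy0
      simp only [star_trivial] at this
      linarith
    · intro h
      rw [h]
      simp
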